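/- Let A be an ungraded commutative symmetric open Frobenius algebra. Define on relative Hochschild chains the product x ∗ y := Σ_{(a_0)} a_0'[a_1,...,a_p, a_0''b_0, b_1,...,b_q] for x = a_0[a_1,...,a_p], y = b_0[b_1,...,b_q]. Then ∗ is strictly associative: (x∗y)∗z = x∗(y∗z). -/

import Mathlib

/-!
The left bimodule property `δ (x * y) = (x ⊗ 1) · δ y` forces `δ x = (x ⊗ 1) · δ 1`, so with
`δ 1 = Σᵢ eᵢ ⊗ fᵢ` the product becomes `a₀[a₁,…,aₚ] ∗ b₀[b₁,…,b_q] = Σᵢ a₀b₀eᵢ[a₁,…,aₚ,fᵢ,b₁,…,b_q]`.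
Both bracketings of a triple product of generators then equal
`Σᵢⱼ a₀b₀c₀eᵢeⱼ[a₁,…,aₚ,fᵢ,b₁,…,b_q,fⱼ,c₁,…,cᵣ]`, by commutativity of `A`;
trilinearity extends this to all chains.
-/

open TensorProduct

variable {k A : Type} [Field k] [CommRing A] [Algebra k A]

/-- Hochschild chains modelled as `A ⊗ T(A)`: a chain `a₀[a₁,…,aₚ]` is
`a₀ ⊗ (ι a₁ * ⋯ * ι aₚ)` in `A ⊗ TensorAlgebra k A`. -/
noncomputable abbrev HChains (k A : Type) [Field k] [CommRing A] [Algebra k A] :=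
  A ⊗[k] TensorAlgebra k A

/-- The chain `a₀[a₁,…,aₚ]`. -/
noncomputable def hchain (a₀ : A) (ℓ : List A) : HChains k A :=
  a₀ ⊗ₜ[k] (ℓ.map (fun a => TensorAlgebra.ι k a)).prod

/-- The product `x ∗ y` on (relative) Hochschild chains of a commutative symmetric
open Frobenius algebra: on generators,
`a₀[a₁,…,aₚ] ∗ b₀[b₁,…,b_q] = Σ (a₀b₀)'[a₁,…,aₚ,(a₀b₀)'',b₁,…,b_q]`. -/
noncomputable def hstar (δ : A →ₗ[k] A ⊗[k] A) :
    (HChains k A) ⊗[k] (HChains k A) →ₗ[k] HChains k A :=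
  let T := TensorAlgebra k A
  let ι : A →ₗ[k] T := TensorAlgebra.ι k
  let inner : A ⊗[k] (T ⊗[k] T) →ₗ[k] T :=
    LinearMap.mul' k T ∘ₗ
      (TensorProduct.map LinearMap.id
        (LinearMap.mul' k T ∘ₗ TensorProduct.map ι LinearMap.id)) ∘ₗ
      (TensorProduct.leftComm k A T T).toLinearMap
  (TensorProduct.map LinearMap.id inner) ∘ₗ
    (TensorProduct.assoc k A A (T ⊗[k] T)).toLinearMap ∘ₗ
    (TensorProduct.map (δ ∘ₗ LinearMap.mul' k A) LinearMap.id) ∘ₗ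
    (TensorProduct.tensorTensorTensorComm k A T A T).toLinearMap

theorem LinearMap.assoc_of_span_eq_top {R M : Type*} [CommSemiring R] [AddCommMonoid M]
    [Module R M] (μ : M ⊗[R] M →ₗ[R] M) {s : Set M} (hs : Submodule.span R s = ⊤)
    (h : ∀ x ∈ s, ∀ y ∈ s, ∀ z ∈ s, μ (μ (x ⊗ₜ y) ⊗ₜ z) = μ (x ⊗ₜ μ (y ⊗ₜ z)))
    (x y z : M) : μ (μ (x ⊗ₜ y) ⊗ₜ z) = μ (x ⊗ₜ μ (y ⊗ₜ z)) := by
  have mem (w : M) : w ∈ Submodule.span R s := hs ▸ Submodule.mem_top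
  induction mem x using Submodule.span_induction with
  | zero => simp only [zero_tmul, map_zero]
  | add x₁ x₂ _ _ h₁ h₂ => simp only [add_tmul, map_add, h₁, h₂]
  | smul r x _ hx => simp only [← smul_tmul', map_smul, hx]
  | mem x hx =>
  induction mem y using Submodule.span_induction with
  | zero => simp only [zero_tmul, tmul_zero, map_zero]
  | add y₁ y₂ _ _ h₁ h₂ => simp only [add_tmul, tmul_add, map_add, h₁, h₂]
  | smul r y _ hy => simp only [← smul_tmul', tmul_smul, map_smul, hy]
  | mem y hy =>
  induction mem z using Submodule.span_induction with
  | zero => simp only [tmul_zero, map_zero]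
  | add z₁ z₂ _ _ h₁ h₂ => simp only [tmul_add, map_add, h₁, h₂]
  | smul r z _ hz => simp only [tmul_smul, map_smul, hz]
  | mem z hz => exact h x hx y hy z hz

theorem hstar_tmul_tmul (δ : A →ₗ[k] A ⊗[k] A) (a b : A) (s t : TensorAlgebra k A) :
    hstar δ ((a ⊗ₜ s) ⊗ₜ (b ⊗ₜ t)) =
      TensorProduct.map LinearMap.id
        (LinearMap.mulLeft k s ∘ₗ LinearMap.mulRight k t ∘ₗ TensorAlgebra.ι k) (δ (a * b)) := by
  simp only [hstar, LinearMap.comp_apply, LinearEquiv.coe_coe, tensorTensorTensorComm_tmul,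
    map_tmul, LinearMap.id_apply, LinearMap.mul'_apply]
  induction δ (a * b) using TensorProduct.induction_on with
  | zero => simp only [zero_tmul, map_zero]
  | tmul c d => simp [TensorProduct.leftComm_tmul, TensorProduct.assoc_tmul]
  | add v₁ v₂ h₁ h₂ => simp only [add_tmul, map_add, h₁, h₂]

theorem hstar_tmul_tmul_eq_sum {δ : A →ₗ[k] A ⊗[k] A}
    (hleft : ∀ x y : A,
      δ (x * y) = (TensorProduct.map (LinearMap.mulLeft k x) LinearMap.id) (δ y))
    {S : Finset (A × A)} (hS : δ 1 = ∑ p ∈ S, p.1 ⊗ₜ p.2) (a b : A) (s t : TensorAlgebra k A) :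
    hstar δ ((a ⊗ₜ s) ⊗ₜ (b ⊗ₜ t)) =
      ∑ p ∈ S, (a * b * p.1) ⊗ₜ (s * TensorAlgebra.ι k p.2 * t) := by
  rw [hstar_tmul_tmul, ← mul_one (a * b), hleft, hS]
  simp [map_sum, mul_assoc]

theorem hstar_assoc_general (δ : A →ₗ[k] A ⊗[k] A)
    (hleft : ∀ x y : A,
      δ (x * y) = (TensorProduct.map (LinearMap.mulLeft k x) LinearMap.id) (δ y)) :
    ∀ x y z : HChains k A,
      hstar δ ((hstar δ (x ⊗ₜ[k] y)) ⊗ₜ[k] z) = hstar δ (x ⊗ₜ[k] (hstar δ (y ⊗ₜ[k] z))) := by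
  obtain ⟨S, hS⟩ := TensorProduct.exists_finset (δ 1)
  have hmul := hstar_tmul_tmul_eq_sum hleft hS
  refine (hstar δ).assoc_of_span_eq_top (TensorProduct.span_tmul_eq_top k A _) ?_
  rintro _ ⟨a, s, rfl⟩ _ ⟨b, t, rfl⟩ _ ⟨c, u, rfl⟩
  simp only [hmul, sum_tmul, tmul_sum, map_sum]
  rw [Finset.sum_comm]
  refine Finset.sum_congr rfl fun p _ => Finset.sum_congr rfl fun q _ => ?_
  congr 1
  · ring
  · simp only [mul_assoc]

/-- for an ungraded commutative symmetric open Frobenius algebra, the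
product `x ∗ y = Σ_{(a₀)} a₀'[a₁,…,aₚ,a₀''b₀,b₁,…,b_q]` on relative Hochschild chains
is strictly associative. -/
theorem hstar_assoc (δ : A →ₗ[k] A ⊗[k] A)
    (hcoassoc : ∀ x : A,
      (TensorProduct.assoc k A A A) ((TensorProduct.map δ LinearMap.id) (δ x)) =
        (TensorProduct.map LinearMap.id δ) (δ x))
    (hright : ∀ x y : A,
      δ (x * y) = (TensorProduct.map LinearMap.id (LinearMap.mulRight k y)) (δ x))
    (hleft : ∀ x y : A,
      δ (x * y) = (TensorProduct.map (LinearMap.mulLeft k x) LinearMap.id) (δ y))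
    (hsymm : (TensorProduct.comm k A A) (δ 1) = δ 1) :
    ∀ x y z : HChains k A,
      hstar δ ((hstar δ (x ⊗ₜ[k] y)) ⊗ₜ[k] z) = hstar δ (x ⊗ₜ[k] (hstar δ (y ⊗ₜ[k] z))) :=
  hstar_assoc_general δ hleft
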